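/- arXiv:1505.00770 — 2 statements merged into one kernel-verified Lean document; each statement's English description precedes it below -/
import Mathlib

section
/- Let Δ : A → A be a weak-2-local derivation on a C*-algebra A, and let p be a projection in a C*-algebra B containing A such that A is a closed two-sided ideal of B. Then the map x ↦ pΔ(x)p from pAp to pAp is a weak-2-local derivation on pAp. -/
/-- A (non-necessarily linear) weak-2-local derivation on a (non-unital) normed complex
algebra `X` (in applications, a C*-algebra): for every `a, b` and every continuous linear
functional `φ` there is a bounded linear derivation `D` agreeing with `Δ` at `a` and `b`
after applying `φ`. -/
def IsWeak2LocalDerivation {X : Type*} [NonUnitalNormedRing X] [NormedSpace ℂ X]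
    (Δ : X → X) : Prop :=
  ∀ a b : X, ∀ φ : X →L[ℂ] ℂ, ∃ D : X →L[ℂ] X,
    (∀ x y : X, D (x * y) = D x * y + x * D y) ∧ φ (Δ a) = φ (D a) ∧ φ (Δ b) = φ (D b)

noncomputable instance nonUnitalSubalgebraNormedSpaceComplex {E : Type*} [NonUnitalNormedRing E]
    [NormedSpace ℂ E] (S : NonUnitalSubalgebra ℂ E) : NormedSpace ℂ S :=
  SubmoduleClass.toNormedSpace (R := ℂ) S

variable {B : Type*} [NonUnitalNormedRing B] [StarRing B] [CStarRing B] [NormedSpace ℂ B]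
  [IsScalarTower ℂ B B] [SMulCommClass ℂ B B] [StarModule ℂ B] [CompleteSpace B]

/-- The corner `pAp` of a subalgebra `A` of `B` by an idempotent `p ∈ B`, realized as the
subalgebra of `A` of those `x` with `p x p = x`. -/
def corner (p : B) (hp : IsIdempotentElem p) (A : NonUnitalSubalgebra ℂ B) :
    NonUnitalSubalgebra ℂ A where
  carrier := {x : A | p * (x : B) * p = (x : B)}
  zero_mem' := by simp
  add_mem' := by
    intro x y hx hy
    simp only [Set.mem_setOf_eq, NonUnitalSubalgebra.coe_add] at *
    rw [mul_add, add_mul, hx, hy]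
  smul_mem' := by
    intro c x hx
    simp only [Set.mem_setOf_eq, NonUnitalSubalgebra.coe_smul] at *
    rw [mul_smul_comm, smul_mul_assoc, hx]
  mul_mem' := by
    intro x y hx hy
    have h2 : ∀ t : B, p * (p * t) = p * t := fun t => by rw [← mul_assoc, hp.eq]
    simp only [Set.mem_setOf_eq, NonUnitalSubalgebra.coe_mul] at *
    calc p * ((x : B) * (y : B)) * p
        = p * ((p * (x : B) * p) * (p * (y : B) * p)) * p := by rw [hx, hy]
      _ = (p * (x : B) * p) * (p * (y : B) * p) := by
          simp only [mul_assoc, h2, hp.eq]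
      _ = (x : B) * (y : B) := by rw [hx, hy]

/-! If `D` is a derivation of `A`, then `x ↦ p D(x) p` is a derivation of the corner `pAp`:
for `x, y ∈ pAp` we have `x = x p` and `y = p y`, so compressing `D(xy) = D(x) y + x D(y)` gives
`p D(xy) p = (p D(x) p) y + x (p D(y) p)`. Given `a, b ∈ pAp` and a functional `φ` on `pAp`,
apply weak-2-locality of `Δ` to `a, b` and the functional `φ(p · p)` on `A`, and compress the
derivation it provides. -/

theorem IsIdempotentElem.mul_eq_right_of_mul_mul_eq {S : Type*} [Semigroup S] {p x : S}
    (hp : IsIdempotentElem p) (hx : p * x * p = x) : p * x = x := by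
  rw [← hx, ← mul_assoc, ← mul_assoc, hp.eq]

theorem IsIdempotentElem.mul_eq_left_of_mul_mul_eq {S : Type*} [Semigroup S] {p x : S}
    (hp : IsIdempotentElem p) (hx : p * x * p = x) : x * p = x := by
  rw [← hx, mul_assoc, mul_assoc, hp.eq, ← mul_assoc]

theorem IsIdempotentElem.mul_mul_mul_mul_eq {S : Type*} [Semigroup S] {p : S}
    (hp : IsIdempotentElem p) (x : S) : p * (p * x * p) * p = p * x * p := by
  rw [← mul_assoc, ← mul_assoc, hp.eq, mul_assoc, hp.eq]

theorem IsIdempotentElem.mul_leibniz_mul_eq {R : Type*} [NonUnitalRing R] {p x y : R}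
    (hp : IsIdempotentElem p) (hx : p * x * p = x) (hy : p * y * p = y) (dx dy : R) :
    p * (dx * y + x * dy) * p = p * dx * p * y + x * (p * dy * p) := by
  calc p * (dx * y + x * dy) * p = p * dx * (y * p) + (p * x) * dy * p := by
        simp only [mul_add, add_mul, mul_assoc]
    _ = p * dx * (p * y) + (x * p) * dy * p := by
        rw [hp.mul_eq_left_of_mul_mul_eq hy, hp.mul_eq_right_of_mul_mul_eq hy,
          hp.mul_eq_right_of_mul_mul_eq hx, hp.mul_eq_left_of_mul_mul_eq hx]
    _ = p * dx * p * y + x * (p * dy * p) := by simp only [mul_assoc]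

theorem IsWeak2LocalDerivation.sandwich {X Y : Type*} [NonUnitalNormedRing X] [NormedSpace ℂ X]
    [NonUnitalNormedRing Y] [NormedSpace ℂ Y] {Δ : X → X} (hΔ : IsWeak2LocalDerivation Δ)
    (P : X →L[ℂ] Y) (j : Y →L[ℂ] X)
    (hP : ∀ D : X →L[ℂ] X, (∀ x y, D (x * y) = D x * y + x * D y) →
      ∀ x y, P (D (j (x * y))) = P (D (j x)) * y + x * P (D (j y))) :
    IsWeak2LocalDerivation (fun y => P (Δ (j y))) := by
  intro a b φ
  obtain ⟨D, hD, ha, hb⟩ := hΔ (j a) (j b) (φ.comp P)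
  exact ⟨P.comp (D.comp j), hP D hD, ha, hb⟩

section Corner

variable {E : Type*} [NonUnitalNormedRing E] [NormedSpace ℂ E] [IsScalarTower ℂ E E]
  [SMulCommClass ℂ E E] (p : E) (hp : IsIdempotentElem p) (A : NonUnitalSubalgebra ℂ E)
  (hA : ∀ x ∈ A, p * x * p ∈ A)

def cornerCompression : A →L[ℂ] corner p hp A where
  toFun x := ⟨⟨p * x * p, hA x x.2⟩, hp.mul_mul_mul_mul_eq (x : E)⟩
  map_add' x y := by ext; simp only [NonUnitalSubalgebra.coe_add, mul_add, add_mul]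
  map_smul' c x := by
    ext; simp only [NonUnitalSubalgebra.coe_smul, mul_smul_comm, smul_mul_assoc, RingHom.id_apply]
  cont := ((continuous_const.mul continuous_subtype_val).mul continuous_const).subtype_mk _
    |>.subtype_mk _

theorem coe_cornerCompression_apply (x : A) :
    ((cornerCompression p hp A hA x : A) : E) = p * x * p :=
  rfl

theorem cornerCompression_map_mul_of_leibniz (D : A →L[ℂ] A)
    (hD : ∀ x y, D (x * y) = D x * y + x * D y) (x y : corner p hp A) :
    cornerCompression p hp A hA (D (x * y)) =
      cornerCompression p hp A hA (D x) * y + x * cornerCompression p hp A hA (D y) := by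
  ext
  simp only [coe_cornerCompression_apply, NonUnitalSubalgebra.coe_add,
    NonUnitalSubalgebra.coe_mul, hD]
  exact hp.mul_leibniz_mul_eq x.2 y.2 _ _

end Corner

/-- Let `A` be a C*-algebra which is a closed two-sided ideal of a C*-algebra `B`, let
`Δ : A → A` be a weak-2-local derivation, and let `p` be a projection in `B`.  Then
`x ↦ p Δ(x) p`, as a map from `pAp` to `pAp`, is a weak-2-local derivation on `pAp`. -/
theorem corner_weak2local_derivation (A : NonUnitalSubalgebra ℂ B)
    (hideal : ∀ b : B, ∀ x ∈ A, b * x ∈ A ∧ x * b ∈ A)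
    (p : B) (hp : IsIdempotentElem p)
    (Δ : A → A) (hΔ : IsWeak2LocalDerivation Δ) :
    IsWeak2LocalDerivation (fun x : corner p hp A =>
      (⟨⟨p * ((Δ x : A) : B) * p,
          (hideal p _ ((hideal p _ (Δ (x : A)).2).1)).2⟩,
        by
          show p * (p * ((Δ (x : A) : A) : B) * p) * p = p * ((Δ (x : A) : A) : B) * p
          have h2 : ∀ t : B, p * (p * t) = p * t := fun t => by rw [← mul_assoc, hp.eq]
          calc p * (p * ((Δ (x : A) : A) : B) * p) * p
              = p * (p * (((Δ (x : A) : A) : B) * (p * p))) := by simp only [mul_assoc]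
            _ = p * ((Δ (x : A) : A) : B) * p := by
                rw [h2, hp.eq, mul_assoc]⟩ : corner p hp A)) := by
  have hA : ∀ x ∈ A, p * x * p ∈ A := fun x hx => (hideal p _ (hideal p x hx).1).2
  exact hΔ.sandwich (cornerCompression p hp A hA) (corner p hp A).toSubmodule.subtypeL
    fun D hD => cornerCompression_map_mul_of_leibniz p hp A hA D hD
end

section
/- Let H be a complex Hilbert space and Δ : K(H) → K(H) a weak-2-local derivation on the C*-algebra of compact operators. Then Δ(a + b) = Δ(a) + Δ(b) for all finite-rank operators a, b on H. -/
variable (H : Type*) [NormedAddCommGroup H] [InnerProductSpace ℂ H] [CompleteSpace H]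

/-- The C*-algebra `K(H)` of compact operators on `H`, as a (non-unital) subalgebra of
`B(H) = H →L[ℂ] H`. -/
noncomputable def compactOps : NonUnitalSubalgebra ℂ (H →L[ℂ] H) where
  carrier := {T | IsCompactOperator T}
  zero_mem' := isCompactOperator_zero
  add_mem' := fun hf hg => hf.add hg
  smul_mem' := fun c T hT => hT.smul c
  mul_mem' := fun {_ g} hf _ => hf.comp_clm g

/-- `T` is a finite-rank operator. -/
def IsFiniteRankOp {H : Type*} [NormedAddCommGroup H] [InnerProductSpace ℂ H]
    (T : H →L[ℂ] H) : Prop :=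
  FiniteDimensional ℂ (LinearMap.range (T : H →ₗ[ℂ] H))


namespace LinearMap

variable {K V W : Type*} [Field K] [AddCommGroup V] [Module K V] [AddCommGroup W] [Module K W]

/-- Junk value `0` when the range of `f` is infinite-dimensional, as `LinearMap.trace` is then `0`. -/
noncomputable def finiteRankTrace (f : V →ₗ[K] V) : K :=
  trace K (range f) (f.rangeRestrict ∘ₗ (range f).subtype)

theorem finiteRankTrace_subtype_comp (S : Submodule K V) [FiniteDimensional K S]
    (g : V →ₗ[K] S) : (S.subtype ∘ₗ g).finiteRankTrace = trace K S (g ∘ₗ S.subtype) := by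
  have hle : range (S.subtype ∘ₗ g) ≤ S :=
    (range_comp_le_range _ _).trans (Submodule.range_subtype S).le
  have := Submodule.finiteDimensional_of_le hle
  have hsubtype : (range (S.subtype ∘ₗ g)).subtype = S.subtype ∘ₗ Submodule.inclusion hle := rfl
  have hg : Submodule.inclusion hle ∘ₗ (S.subtype ∘ₗ g).rangeRestrict = g := by ext; rfl
  rw [finiteRankTrace, hsubtype, ← comp_assoc, trace_comp_comm', ← comp_assoc, hg]

theorem finiteRankTrace_comp [FiniteDimensional K W] (u : V →ₗ[K] W) (v : W →ₗ[K] V) :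
    (v ∘ₗ u).finiteRankTrace = trace K W (u ∘ₗ v) := by
  have h : v ∘ₗ u = (range v).subtype ∘ₗ (v.rangeRestrict ∘ₗ u) := rfl
  rw [h, finiteRankTrace_subtype_comp, comp_assoc, trace_comp_comm', comp_assoc]
  rfl

theorem finiteRankTrace_comp_comm (f : V →ₗ[K] V) {g : V →ₗ[K] V}
    (hg : FiniteDimensional K (range g)) :
    (f ∘ₗ g).finiteRankTrace = (g ∘ₗ f).finiteRankTrace := by
  have h₁ : f ∘ₗ g = (f ∘ₗ (range g).subtype) ∘ₗ g.rangeRestrict := rfl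
  have h₂ : g ∘ₗ f = (range g).subtype ∘ₗ (g.rangeRestrict ∘ₗ f) := rfl
  rw [h₁, h₂, finiteRankTrace_comp, finiteRankTrace_comp, comp_assoc]

theorem finiteRankTrace_add {f g : V →ₗ[K] V} (hf : FiniteDimensional K (range f))
    (hg : FiniteDimensional K (range g)) :
    (f + g).finiteRankTrace = f.finiteRankTrace + g.finiteRankTrace := by
  set S := range f ⊔ range g
  have hfS : range f ≤ S := le_sup_left
  have hgS : range g ≤ S := le_sup_right
  have hf' : f = S.subtype ∘ₗ (Submodule.inclusion hfS ∘ₗ f.rangeRestrict) := rfl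
  have hg' : g = S.subtype ∘ₗ (Submodule.inclusion hgS ∘ₗ g.rangeRestrict) := rfl
  rw [hf', hg', ← comp_add, finiteRankTrace_subtype_comp, finiteRankTrace_subtype_comp,
    finiteRankTrace_subtype_comp, add_comp, map_add]

theorem finiteRankTrace_smul (c : K) {f : V →ₗ[K] V} (hf : FiniteDimensional K (range f)) :
    (c • f).finiteRankTrace = c * f.finiteRankTrace := by
  have hf' : f = (range f).subtype ∘ₗ f.rangeRestrict := rfl
  rw [hf', ← comp_smul, finiteRankTrace_subtype_comp, finiteRankTrace_subtype_comp, smul_comp,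
    map_smul, smul_eq_mul]

@[simp] theorem finiteRankTrace_zero : (0 : V →ₗ[K] V).finiteRankTrace = 0 := by
  simpa using finiteRankTrace_subtype_comp (⊥ : Submodule K V) 0

theorem mem_finiteRange_iff_finiteDimensional_range {f : V →ₗ[K] V} :
    f ∈ finiteRange K V V ↔ FiniteDimensional K (range f) :=
  IsNoetherian.iff_fg

theorem finiteRankTrace_sum {ι : Type*} (s : Finset ι) {f : ι → V →ₗ[K] V}
    (hf : ∀ i ∈ s, FiniteDimensional K (range (f i))) :
    (∑ i ∈ s, f i).finiteRankTrace = ∑ i ∈ s, (f i).finiteRankTrace := by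
  classical
  induction s using Finset.induction_on with
  | empty => simp
  | insert i s hi ih =>
    have hs : ∀ j ∈ s, FiniteDimensional K (range (f j)) :=
      fun j hj => hf j (s.mem_insert_of_mem hj)
    have hsum : FiniteDimensional K (range (∑ j ∈ s, f j)) :=
      mem_finiteRange_iff_finiteDimensional_range.1 <| Submodule.sum_mem _ fun j hj =>
        mem_finiteRange_iff_finiteDimensional_range.2 (hs j hj)
    rw [Finset.sum_insert hi, Finset.sum_insert hi,
      finiteRankTrace_add (hf i (s.mem_insert_self i)) hsum, ih hs]

end LinearMap

section FiniteRankOperators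

open LinearMap InnerProductSpace

variable {H : Type*} [NormedAddCommGroup H] [InnerProductSpace ℂ H] {S T : H →L[ℂ] H}

theorem isFiniteRankOp_iff_mem_finiteRange :
    IsFiniteRankOp T ↔ (T : H →ₗ[ℂ] H) ∈ finiteRange ℂ H H :=
  mem_finiteRange_iff_finiteDimensional_range.symm

theorem IsFiniteRankOp.add (hS : IsFiniteRankOp S) (hT : IsFiniteRankOp T) :
    IsFiniteRankOp (S + T) := by
  rw [isFiniteRankOp_iff_mem_finiteRange] at *
  exact add_mem hS hT

theorem IsFiniteRankOp.mul_right (hS : IsFiniteRankOp S) (T : H →L[ℂ] H) :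
    IsFiniteRankOp (S * T) := by
  rw [isFiniteRankOp_iff_mem_finiteRange] at *
  exact hS.comp_right _

theorem IsFiniteRankOp.mul_left (S : H →L[ℂ] H) (hT : IsFiniteRankOp T) :
    IsFiniteRankOp (S * T) := by
  rw [isFiniteRankOp_iff_mem_finiteRange] at *
  exact hT.comp_left _

theorem isFiniteRankOp_rankOne (ξ η : H) : IsFiniteRankOp (rankOne ℂ ξ η) := by
  rw [isFiniteRankOp_iff_mem_finiteRange, rankOne_def', ContinuousLinearMap.toLinearMap_comp]
  exact HasNoetherianRange.of_isNoetherian_dom.comp_right _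

theorem rankOne_mem_compactOps (ξ η : H) : rankOne ℂ ξ η ∈ compactOps H := by
  rw [rankOne_def']
  exact (isCompactOperator_of_locallyCompactSpace_dom (innerSL ℂ η)).clm_comp
    (ContinuousLinearMap.toSpanSingleton ℂ ξ)

theorem finiteRankTrace_rankOne_comp (ξ η : H) (T : H →ₗ[ℂ] H) :
    ((rankOne ℂ ξ η : H →ₗ[ℂ] H) ∘ₗ T).finiteRankTrace = inner ℂ η (T ξ) := by
  rw [rankOne_def', ContinuousLinearMap.toLinearMap_comp, comp_assoc, finiteRankTrace_comp]
  simp [trace_eq_sum_inner _ (OrthonormalBasis.singleton Unit ℂ)]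

variable [CompleteSpace H]

theorem IsFiniteRankOp.exists_eq_sum_rankOne (hT : IsFiniteRankOp T) :
    ∃ (n : ℕ) (ξ η : Fin n → H), (∀ i, ‖ξ i‖ = 1) ∧ T = ∑ i, rankOne ℂ (ξ i) (η i) := by
  have : FiniteDimensional ℂ (range (T : H →ₗ[ℂ] H)) := hT
  set W := range (T : H →ₗ[ℂ] H)
  let b := stdOrthonormalBasis ℂ W
  refine ⟨_, fun i => b i, fun i => T.adjoint (b i), fun i => b.norm_eq_one i, ?_⟩
  calc T = W.starProjection ∘L T := by
        ext x
        exact (W.starProjection_eq_self_iff.2 (mem_range_self _ x)).symm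
    _ = _ := by
      rw [b.starProjection_eq_sum_rankOne, ContinuousLinearMap.finsetSum_comp]
      simp [rankOne_comp]

theorem IsFiniteRankOp.exists_clm_eq_finiteRankTrace_mul (hT : IsFiniteRankOp T) :
    ∃ φ : (H →L[ℂ] H) →L[ℂ] ℂ, ∀ S, φ S = finiteRankTrace ((T * S : H →L[ℂ] H) : H →ₗ[ℂ] H) := by
  obtain ⟨n, ξ, η, -, rfl⟩ := hT.exists_eq_sum_rankOne
  refine ⟨∑ i, innerSL ℂ (η i) ∘L ContinuousLinearMap.apply ℂ H (ξ i), fun S => ?_⟩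
  rw [Finset.sum_mul, ContinuousLinearMap.toLinearMap_sum,
    finiteRankTrace_sum _ fun i _ => (isFiniteRankOp_rankOne _ _).mul_right S]
  simp [ContinuousLinearMap.mul_def, ContinuousLinearMap.toLinearMap_comp,
    finiteRankTrace_rankOne_comp]

end FiniteRankOperators

section OperatorTrace

open LinearMap InnerProductSpace

variable {H : Type*} [NormedAddCommGroup H] [InnerProductSpace ℂ H]

local notation "tr " x:max => finiteRankTrace ((↑x : H →L[ℂ] H) : H →ₗ[ℂ] H)

section Subalgebra

variable {A : NonUnitalSubalgebra ℂ (H →L[ℂ] H)}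

theorem finiteRankTrace_coe_add (x y : A) (hx : IsFiniteRankOp (x : H →L[ℂ] H))
    (hy : IsFiniteRankOp (y : H →L[ℂ] H)) : tr (x + y) = tr x + tr y :=
  finiteRankTrace_add hx hy

theorem finiteRankTrace_coe_smul (c : ℂ) {x : A} (hx : IsFiniteRankOp (x : H →L[ℂ] H)) :
    tr (c • x) = c * tr x :=
  finiteRankTrace_smul c hx

theorem finiteRankTrace_coe_mul_comm (x : A) {y : A} (hy : IsFiniteRankOp (y : H →L[ℂ] H)) :
    tr (x * y) = tr (y * x) :=
  finiteRankTrace_comp_comm _ hy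

theorem finiteRankTrace_coe_sum {ι : Type*} (s : Finset ι) {x : ι → A}
    (hx : ∀ i ∈ s, IsFiniteRankOp (x i : H →L[ℂ] H)) :
    tr (∑ i ∈ s, x i) = ∑ i ∈ s, tr (x i) := by
  push_cast
  exact finiteRankTrace_sum s hx

variable (D : A →ₗ[ℂ] A)

theorem isFiniteRankOp_apply_mul (hD : ∀ x y : A, D (x * y) = D x * y + x * D y) {u v : A}
    (hu : IsFiniteRankOp (u : H →L[ℂ] H)) (hv : IsFiniteRankOp (v : H →L[ℂ] H)) :
    IsFiniteRankOp (D (u * v) : H →L[ℂ] H) := by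
  rw [hD]
  exact (hv.mul_left _).add (hu.mul_right _)

theorem finiteRankTrace_apply_mul_comm (hD : ∀ x y : A, D (x * y) = D x * y + x * D y)
    {u v : A} (hu : IsFiniteRankOp (u : H →L[ℂ] H)) (hv : IsFiniteRankOp (v : H →L[ℂ] H)) :
    tr (D (u * v)) = tr (D (v * u)) := by
  rw [hD, hD, finiteRankTrace_coe_add (D u * v) (u * D v) (hv.mul_left _) (hu.mul_right _),
    finiteRankTrace_coe_add (D v * u) (v * D u) (hu.mul_left _) (hv.mul_right _),
    finiteRankTrace_coe_mul_comm _ hv, finiteRankTrace_coe_mul_comm (D v) hu, add_comm]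

theorem finiteRankTrace_apply_eq_zero_of_isIdempotentElem
    (hD : ∀ x y : A, D (x * y) = D x * y + x * D y) {q : A} (hq : IsIdempotentElem q)
    (hfq : IsFiniteRankOp (q : H →L[ℂ] H)) : tr (D q) = 0 := by
  have hDq : D q = D q * q + q * D q := by rw [← hD, hq.eq]
  have hqDqq : q * D q * q = 0 := by
    have h : q * D q * q = q * D q * q + q * D q * q :=
      calc q * D q * q = q * (D q * q + q * D q) * q := by rw [← hDq]
        _ = q * D q * (q * q) + (q * q) * D q * q := by noncomm_ring
        _ = q * D q * q + q * D q * q := by rw [hq.eq]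
    simpa using h
  have hcyc : tr (q * D q) = tr (q * D q * q) := by
    rw [finiteRankTrace_coe_mul_comm _ hfq, ← mul_assoc, hq.eq]
  rw [hDq, finiteRankTrace_coe_add (D q * q) (q * D q) (hfq.mul_left _) (hfq.mul_right _),
    finiteRankTrace_coe_mul_comm _ hfq, hcyc, hqDqq]
  simp

theorem rankOne_self_mul_rankOne (hA : ∀ ξ η : H, rankOne ℂ ξ η ∈ A) {ξ : H} (hξ : ‖ξ‖ = 1)
    (η : H) :
    (⟨rankOne ℂ ξ ξ, hA ξ ξ⟩ : A) * ⟨rankOne ℂ ξ η, hA ξ η⟩ = ⟨rankOne ℂ ξ η, hA ξ η⟩ := by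
  ext1
  simp [ContinuousLinearMap.mul_def, rankOne_comp_rankOne, inner_self_eq_norm_sq_to_K, hξ]

theorem isFiniteRankOp_apply_rankOne (hD : ∀ x y : A, D (x * y) = D x * y + x * D y)
    (hA : ∀ ξ η : H, rankOne ℂ ξ η ∈ A) {ξ : H} (hξ : ‖ξ‖ = 1) (η : H) :
    IsFiniteRankOp (D ⟨rankOne ℂ ξ η, hA ξ η⟩ : H →L[ℂ] H) := by
  rw [← rankOne_self_mul_rankOne hA hξ η]
  exact isFiniteRankOp_apply_mul D hD (isFiniteRankOp_rankOne ξ ξ) (isFiniteRankOp_rankOne ξ η)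

theorem finiteRankTrace_apply_rankOne (hD : ∀ x y : A, D (x * y) = D x * y + x * D y)
    (hA : ∀ ξ η : H, rankOne ℂ ξ η ∈ A) {ξ : H} (hξ : ‖ξ‖ = 1) (η : H) :
    tr (D ⟨rankOne ℂ ξ η, hA ξ η⟩) = 0 := by
  set p : A := ⟨rankOne ℂ ξ ξ, hA ξ ξ⟩
  set r : A := ⟨rankOne ℂ ξ η, hA ξ η⟩
  have hpf : IsFiniteRankOp (p : H →L[ℂ] H) := isFiniteRankOp_rankOne ξ ξ
  have hrf : IsFiniteRankOp (r : H →L[ℂ] H) := isFiniteRankOp_rankOne ξ η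
  have hpr : p * r = r := rankOne_self_mul_rankOne hA hξ η
  have hrp : r * p = inner ℂ η ξ • p := by
    ext1
    simp [p, r, ContinuousLinearMap.mul_def, rankOne_comp_rankOne]
  have hp : IsIdempotentElem p := Subtype.ext (isIdempotentElem_rankOne_self hξ)
  rw [← hpr, finiteRankTrace_apply_mul_comm D hD hpf hrf, hrp, map_smul,
    finiteRankTrace_coe_smul _ (isFiniteRankOp_apply_rankOne D hD hA hξ ξ),
    finiteRankTrace_apply_eq_zero_of_isIdempotentElem D hD hp hpf, mul_zero]

variable [CompleteSpace H]

theorem finiteRankTrace_apply_eq_zero (hD : ∀ x y : A, D (x * y) = D x * y + x * D y)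
    (hA : ∀ ξ η : H, rankOne ℂ ξ η ∈ A) {x : A} (hx : IsFiniteRankOp (x : H →L[ℂ] H)) :
    tr (D x) = 0 := by
  obtain ⟨n, ξ, η, hξ, hsum⟩ := hx.exists_eq_sum_rankOne
  have hx' : x = ∑ i, ⟨rankOne ℂ (ξ i) (η i), hA (ξ i) (η i)⟩ := by
    ext1
    simpa using hsum
  rw [hx', map_sum,
    finiteRankTrace_coe_sum _ fun i _ => isFiniteRankOp_apply_rankOne D hD hA (hξ i) (η i)]
  exact Finset.sum_eq_zero fun i _ => finiteRankTrace_apply_rankOne D hD hA (hξ i) (η i)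

theorem finiteRankTrace_mul_apply_eq_neg (hD : ∀ x y : A, D (x * y) = D x * y + x * D y)
    (hA : ∀ ξ η : H, rankOne ℂ ξ η ∈ A) {x c : A} (hx : IsFiniteRankOp (x : H →L[ℂ] H))
    (hc : IsFiniteRankOp (c : H →L[ℂ] H)) : tr (c * D x) = -tr (x * D c) := by
  have h := finiteRankTrace_apply_eq_zero D hD hA (x := x * c) (hx.mul_right _)
  rw [hD, finiteRankTrace_coe_add (D x * c) (x * D c) (hc.mul_left _) (hx.mul_right _),
    finiteRankTrace_coe_mul_comm _ hc] at h
  exact eq_neg_of_add_eq_zero_left h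

theorem finiteRankTrace_mul_apply_self (hD : ∀ x y : A, D (x * y) = D x * y + x * D y)
    (hA : ∀ ξ η : H, rankOne ℂ ξ η ∈ A) {x : A} (hx : IsFiniteRankOp (x : H →L[ℂ] H)) :
    tr (x * D x) = 0 :=
  self_eq_neg.mp (finiteRankTrace_mul_apply_eq_neg D hD hA hx hx)

end Subalgebra

section CompactOperators

variable [CompleteSpace H]

noncomputable instance : NormedSpace ℂ (compactOps H) := SubmoduleClass.toNormedSpace _

theorem exists_clm_eq_finiteRankTrace_mul {x : compactOps H}
    (hx : IsFiniteRankOp (x : H →L[ℂ] H)) :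
    ∃ φ : compactOps H →L[ℂ] ℂ, ∀ z, φ z = tr (x * z) := by
  obtain ⟨φ, hφ⟩ := hx.exists_clm_eq_finiteRankTrace_mul
  exact ⟨φ ∘L (compactOps H).toSubmodule.subtypeL, fun z => hφ z⟩

namespace IsWeak2LocalDerivation

variable {Δ : compactOps H → compactOps H}

theorem finiteRankTrace_mul_apply_self (hΔ : IsWeak2LocalDerivation Δ) {x : compactOps H}
    (hx : IsFiniteRankOp (x : H →L[ℂ] H)) : tr (x * Δ x) = 0 := by
  obtain ⟨φ, hφ⟩ := exists_clm_eq_finiteRankTrace_mul hx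
  obtain ⟨D, hD, hDx, -⟩ := hΔ x x φ
  rw [← hφ, hDx, hφ]
  exact _root_.finiteRankTrace_mul_apply_self D.toLinearMap hD rankOne_mem_compactOps hx

theorem finiteRankTrace_mul_apply_eq_neg (hΔ : IsWeak2LocalDerivation Δ) {x c : compactOps H}
    (hx : IsFiniteRankOp (x : H →L[ℂ] H)) (hc : IsFiniteRankOp (c : H →L[ℂ] H)) :
    tr (c * Δ x) = -tr (x * Δ c) := by
  obtain ⟨φc, hφc⟩ := exists_clm_eq_finiteRankTrace_mul hc
  obtain ⟨φx, hφx⟩ := exists_clm_eq_finiteRankTrace_mul hx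
  obtain ⟨D, hD, hDx, hDc⟩ := hΔ x c (φc + φx)
  simp only [_root_.add_apply, hφc, hφx] at hDx hDc
  have hDxx : tr (x * D x) = 0 :=
    _root_.finiteRankTrace_mul_apply_self D.toLinearMap hD rankOne_mem_compactOps hx
  have hDcc : tr (c * D c) = 0 :=
    _root_.finiteRankTrace_mul_apply_self D.toLinearMap hD rankOne_mem_compactOps hc
  have hDneg : tr (c * D x) = -tr (x * D c) :=
    _root_.finiteRankTrace_mul_apply_eq_neg D.toLinearMap hD rankOne_mem_compactOps hx hc
  linear_combination hDx + hDc + hDneg + hDxx + hDcc - hΔ.finiteRankTrace_mul_apply_self hx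
    - hΔ.finiteRankTrace_mul_apply_self hc

theorem inner_apply_eq_neg_finiteRankTrace (hΔ : IsWeak2LocalDerivation Δ) {x : compactOps H}
    (hx : IsFiniteRankOp (x : H →L[ℂ] H)) (ξ η : H) :
    inner ℂ η ((Δ x : H →L[ℂ] H) ξ) =
      -tr (x * Δ ⟨rankOne ℂ ξ η, rankOne_mem_compactOps ξ η⟩) := by
  have hc : IsFiniteRankOp ((⟨rankOne ℂ ξ η, rankOne_mem_compactOps ξ η⟩ : compactOps H) :
      H →L[ℂ] H) := isFiniteRankOp_rankOne ξ η
  rw [← hΔ.finiteRankTrace_mul_apply_eq_neg hx hc]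
  exact (finiteRankTrace_rankOne_comp ξ η _).symm

end IsWeak2LocalDerivation

end CompactOperators

end OperatorTrace

/-- Every weak-2-local derivation `Δ` on `K(H)` is additive on finite-rank operators:
`Δ(a + b) = Δ(a) + Δ(b)` for all finite-rank `a, b`. -/
theorem weak2local_additive_on_finite_ranks
    (Δ : compactOps H → compactOps H) (hΔ : @IsWeak2LocalDerivation _ _ (SubmoduleClass.toNormedSpace _) Δ)
    (a b : compactOps H) (ha : IsFiniteRankOp (a : H →L[ℂ] H))
    (hb : IsFiniteRankOp (b : H →L[ℂ] H)) :
    Δ (a + b) = Δ a + Δ b := by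
  ext1
  ext ξ
  refine ext_inner_left ℂ fun η => ?_
  set c : compactOps H := ⟨InnerProductSpace.rankOne ℂ ξ η, rankOne_mem_compactOps ξ η⟩
  rw [NonUnitalSubalgebra.coe_add, _root_.add_apply, inner_add_right,
    hΔ.inner_apply_eq_neg_finiteRankTrace (ha.add hb), hΔ.inner_apply_eq_neg_finiteRankTrace ha,
    hΔ.inner_apply_eq_neg_finiteRankTrace hb, add_mul,
    finiteRankTrace_coe_add (a * Δ c) (b * Δ c) (ha.mul_right _) (hb.mul_right _), neg_add]
end
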